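/- A permutation avoids both generalized patterns 1-32 and 13-2 if and only if it avoids the classical pattern 1-3-2; consequently the number of permutations of [n] avoiding both 1-32 and 13-2 equals the n-th Catalan number. -/
import Mathlib
set_option maxHeartbeats 1000000

def contains132 {n : ℕ} (π : Equiv.Perm (Fin n)) : Prop :=
  ∃ i j : ℕ, ∃ (_ : i < j) (hj : j + 1 < n),
    π ⟨i, by omega⟩ < π ⟨j + 1, hj⟩ ∧ π ⟨j + 1, hj⟩ < π ⟨j, by omega⟩

def contains13_2 {n : ℕ} (π : Equiv.Perm (Fin n)) : Prop :=
  ∃ i j : ℕ, ∃ (_ : i + 1 < j) (hj : j < n),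
    π ⟨i, by omega⟩ < π ⟨j, hj⟩ ∧ π ⟨j, hj⟩ < π ⟨i + 1, by omega⟩

def containsClassical132 {n : ℕ} (π : Equiv.Perm (Fin n)) : Prop :=
  ∃ i j k : Fin n, i < j ∧ j < k ∧ π i < π k ∧ π k < π j

lemma c132_classical {n : ℕ} {π : Equiv.Perm (Fin n)} (h : contains132 π) :
    containsClassical132 π := by
  obtain ⟨i, j, hij, hj, h1, h2⟩ := h
  exact ⟨⟨i, by omega⟩, ⟨j, by omega⟩, ⟨j + 1, hj⟩, by simpa [Fin.lt_def], by simp [Fin.lt_def],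
    h1, h2⟩

lemma c13_2_classical {n : ℕ} {π : Equiv.Perm (Fin n)} (h : contains13_2 π) :
    containsClassical132 π := by
  obtain ⟨i, j, hij, hj, h1, h2⟩ := h
  exact ⟨⟨i, by omega⟩, ⟨i + 1, by omega⟩, ⟨j, hj⟩, by simp [Fin.lt_def],
    by simpa [Fin.lt_def], h1, h2⟩

lemma classical_c13_2 {n : ℕ} {π : Equiv.Perm (Fin n)} (h : containsClassical132 π) :
    contains13_2 π := by
  classical
  obtain ⟨i, j, k, hij, hjk, h1, h2⟩ := h
  have hij' : i.val < j.val := hij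
  have hjk' : j.val < k.val := hjk
  have hjn : j.val < n := j.isLt
  have hkn : k.val < n := k.isLt
  have key : ∃ e, ∃ hej : e < j.val, i.val ≤ e ∧ π ⟨e, by omega⟩ < π k ∧
      ∀ m (hm : m < j.val), e < m → ¬ π ⟨m, by omega⟩ < π k := by
    set P : ℕ → Prop := fun m => i.val ≤ m ∧ ∃ hm : m < j.val, π ⟨m, by omega⟩ < π k with hP
    have hPi : P i.val := ⟨le_refl _, hij', by simpa using h1⟩
    have hspec : P (Nat.findGreatest P j.val) := Nat.findGreatest_spec (le_of_lt hij') hPi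
    obtain ⟨hie, hej, hev⟩ := hspec
    refine ⟨Nat.findGreatest P j.val, hej, hie, hev, ?_⟩
    intro m hm hgt hc
    exact Nat.findGreatest_is_greatest hgt (le_of_lt hm) ⟨by omega, hm, hc⟩
  obtain ⟨e, hej, hie, hev, hmax⟩ := key
  have hnext : π k < π ⟨e + 1, by omega⟩ := by
    rcases eq_or_lt_of_le (Nat.succ_le_of_lt hej) with heq | hlt
    · have hj : (⟨e + 1, by omega⟩ : Fin n) = j := Fin.ext heq
      rw [hj]; exact h2
    · have hge : ¬ π ⟨e + 1, by omega⟩ < π k := hmax (e+1) hlt (by omega)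
      have hne : π ⟨e + 1, by omega⟩ ≠ π k := by
        intro hc
        have h3 : (⟨e + 1, by omega⟩ : Fin n) = k := π.injective hc
        have h4 : e + 1 = k.val := congrArg Fin.val h3
        omega
      exact lt_of_le_of_ne (le_of_not_gt hge) (Ne.symm hne)
  refine ⟨e, k.val, by omega, hkn, ?_, ?_⟩
  · simp only [Fin.eta]
    exact hev
  · simp only [Fin.eta]
    exact hnext

abbrev Av (m : ℕ) : Type := {π : Equiv.Perm (Fin m) // ¬ containsClassical132 π}

section Glue

variable {n p : ℕ}

def glueFun (p n : ℕ) (hp : p ≤ n) (σ : Equiv.Perm (Fin p)) (τ : Equiv.Perm (Fin (n - p))) :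
    Fin (n + 1) → Fin (n + 1) := fun x =>
  if h : x.val < p then
    ⟨(σ ⟨x.val, h⟩).val + (n - p), by have h2 := (σ ⟨x.val, h⟩).isLt; omega⟩
  else if h2 : x.val = p then ⟨n, by omega⟩
  else
    have h3 : x.val - p - 1 < n - p := by have := x.isLt; omega
    ⟨(τ ⟨x.val - p - 1, h3⟩).val, by have := (τ ⟨x.val - p - 1, h3⟩).isLt; omega⟩

lemma glueFun_val_lt (hp : p ≤ n) (σ : Equiv.Perm (Fin p)) (τ : Equiv.Perm (Fin (n - p)))
    (x : Fin (n + 1)) (h : x.val < p) :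
    (glueFun p n hp σ τ x).val = (σ ⟨x.val, h⟩).val + (n - p) := by
  simp [glueFun, h]

lemma glueFun_val_eq (hp : p ≤ n) (σ : Equiv.Perm (Fin p)) (τ : Equiv.Perm (Fin (n - p)))
    (x : Fin (n + 1)) (h : x.val = p) :
    (glueFun p n hp σ τ x).val = n := by
  simp [glueFun, h]

lemma glueFun_val_gt (hp : p ≤ n) (σ : Equiv.Perm (Fin p)) (τ : Equiv.Perm (Fin (n - p)))
    (x : Fin (n + 1)) (h : p < x.val) (h3 : x.val - p - 1 < n - p) :
    (glueFun p n hp σ τ x).val = (τ ⟨x.val - p - 1, h3⟩).val := by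
  have h1 : ¬ x.val < p := by omega
  have h2 : ¬ x.val = p := by omega
  simp [glueFun, h1, h2]

lemma glueFun_inj (hp : p ≤ n) (σ : Equiv.Perm (Fin p)) (τ : Equiv.Perm (Fin (n - p))) :
    Function.Injective (glueFun p n hp σ τ) := by
  intro x y hxy
  have hxy' : (glueFun p n hp σ τ x).val = (glueFun p n hp σ τ y).val := by rw [hxy]
  have hx := x.isLt
  have hy := y.isLt
  apply Fin.ext
  rcases lt_trichotomy x.val p with h1 | h1 | h1 <;> rcases lt_trichotomy y.val p with h2 | h2 | h2
  · -- both < p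
    rw [glueFun_val_lt hp σ τ x h1, glueFun_val_lt hp σ τ y h2] at hxy'
    have : σ ⟨x.val, h1⟩ = σ ⟨y.val, h2⟩ := Fin.ext (by omega)
    have h5 := σ.injective this
    have h6 := congrArg Fin.val h5
    simpa using h6
  · rw [glueFun_val_lt hp σ τ x h1, glueFun_val_eq hp σ τ y h2] at hxy'
    have := (σ ⟨x.val, h1⟩).isLt; omega
  · have h3 : y.val - p - 1 < n - p := by omega
    rw [glueFun_val_lt hp σ τ x h1, glueFun_val_gt hp σ τ y h2 h3] at hxy'
    have := (τ ⟨y.val - p - 1, h3⟩).isLt; omega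
  · rw [glueFun_val_eq hp σ τ x h1, glueFun_val_lt hp σ τ y h2] at hxy'
    have := (σ ⟨y.val, h2⟩).isLt; omega
  · omega
  · have h3 : y.val - p - 1 < n - p := by omega
    rw [glueFun_val_eq hp σ τ x h1, glueFun_val_gt hp σ τ y h2 h3] at hxy'
    have := (τ ⟨y.val - p - 1, h3⟩).isLt; omega
  · have h3 : x.val - p - 1 < n - p := by omega
    rw [glueFun_val_gt hp σ τ x h1 h3, glueFun_val_lt hp σ τ y h2] at hxy'
    have := (τ ⟨x.val - p - 1, h3⟩).isLt; omega
  · have h3 : x.val - p - 1 < n - p := by omega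
    rw [glueFun_val_gt hp σ τ x h1 h3, glueFun_val_eq hp σ τ y h2] at hxy'
    have := (τ ⟨x.val - p - 1, h3⟩).isLt; omega
  · have h3 : x.val - p - 1 < n - p := by omega
    have h4 : y.val - p - 1 < n - p := by omega
    rw [glueFun_val_gt hp σ τ x h1 h3, glueFun_val_gt hp σ τ y h2 h4] at hxy'
    have : τ ⟨x.val - p - 1, h3⟩ = τ ⟨y.val - p - 1, h4⟩ := Fin.ext hxy'
    have := τ.injective this
    have := congrArg Fin.val this
    simp only at this
    omega

noncomputable def gluePerm (p n : ℕ) (hp : p ≤ n) (σ : Equiv.Perm (Fin p))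
    (τ : Equiv.Perm (Fin (n - p))) : Equiv.Perm (Fin (n + 1)) :=
  Equiv.ofBijective _ (Finite.injective_iff_bijective.mp (glueFun_inj hp σ τ))

lemma gluePerm_apply (hp : p ≤ n) (σ : Equiv.Perm (Fin p)) (τ : Equiv.Perm (Fin (n - p)))
    (x : Fin (n + 1)) : gluePerm p n hp σ τ x = glueFun p n hp σ τ x := rfl

end Glue

lemma glue_avoid {n p : ℕ} (hp : p ≤ n) (σ : Equiv.Perm (Fin p)) (τ : Equiv.Perm (Fin (n - p)))
    (hσ : ¬ containsClassical132 σ) (hτ : ¬ containsClassical132 τ) :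
    ¬ containsClassical132 (gluePerm p n hp σ τ) := by
  rintro ⟨i, j, k, hij, hjk, h1, h2⟩
  set G := gluePerm p n hp σ τ with hG
  have hij' : i.val < j.val := hij
  have hjk' : j.val < k.val := hjk
  have h1' : (glueFun p n hp σ τ i).val < (glueFun p n hp σ τ k).val := h1
  have h2' : (glueFun p n hp σ τ k).val < (glueFun p n hp σ τ j).val := h2
  have hi := i.isLt
  have hj := j.isLt
  have hk := k.isLt
  rcases lt_trichotomy k.val p with hkp | hkp | hkp
  · -- all in left block: pattern in σ
    have hip : i.val < p := by omega
    have hjp : j.val < p := by omega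
    rw [glueFun_val_lt hp σ τ i hip, glueFun_val_lt hp σ τ k hkp] at h1'
    rw [glueFun_val_lt hp σ τ k hkp, glueFun_val_lt hp σ τ j hjp] at h2'
    exact hσ ⟨⟨i.val, hip⟩, ⟨j.val, hjp⟩, ⟨k.val, hkp⟩, Fin.mk_lt_mk.mpr hij',
      Fin.mk_lt_mk.mpr hjk', Fin.lt_def.mpr (by omega), Fin.lt_def.mpr (by omega)⟩
  · -- k at p: G k = n is maximal, contradicts G k < G j
    rw [glueFun_val_eq hp σ τ k hkp] at h2'
    have := (glueFun p n hp σ τ j).isLt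
    omega
  · -- k in right block
    have h3 : k.val - p - 1 < n - p := by omega
    rw [glueFun_val_gt hp σ τ k hkp h3] at h1' h2'
    have hkv := (τ ⟨k.val - p - 1, h3⟩).isLt
    -- i must be in right block
    have hip : p < i.val := by
      rcases lt_trichotomy i.val p with hipp | hipp | hipp
      · rw [glueFun_val_lt hp σ τ i hipp] at h1'
        omega
      · rw [glueFun_val_eq hp σ τ i hipp] at h1'
        omega
      · exact hipp
    have hjp : p < j.val := by omega
    have h4 : i.val - p - 1 < n - p := by omega
    have h5 : j.val - p - 1 < n - p := by omega
    rw [glueFun_val_gt hp σ τ i hip h4] at h1'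
    rw [glueFun_val_gt hp σ τ j hjp h5] at h2'
    exact hτ ⟨⟨i.val - p - 1, h4⟩, ⟨j.val - p - 1, h5⟩, ⟨k.val - p - 1, h3⟩,
      Fin.mk_lt_mk.mpr (by omega), Fin.mk_lt_mk.mpr (by omega),
      Fin.lt_def.mpr (by omega), Fin.lt_def.mpr (by omega)⟩

lemma decomp {n : ℕ} (π : Equiv.Perm (Fin (n + 1))) (hπ : ¬ containsClassical132 π) :
    ∃ (p : ℕ) (hp : p ≤ n) (σ : Equiv.Perm (Fin p)) (τ : Equiv.Perm (Fin (n - p))),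
      ¬ containsClassical132 σ ∧ ¬ containsClassical132 τ ∧ gluePerm p n hp σ τ = π := by
  classical
  obtain ⟨p, hp, hL0v, hLne⟩ : ∃ (p : ℕ) (hp : p ≤ n),
      (∀ h : p < n + 1, (π ⟨p, h⟩).val = n) ∧
      (∀ x : Fin (n + 1), x.val ≠ p → (π x).val ≠ n) := by
    refine ⟨(π.symm ⟨n, by omega⟩).val, by have := (π.symm ⟨n, by omega⟩).isLt; omega, ?_, ?_⟩
    · intro h
      have h1 : (⟨(π.symm ⟨n, by omega⟩).val, h⟩ : Fin (n + 1)) = π.symm ⟨n, by omega⟩ :=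
        Fin.ext rfl
      rw [h1, π.apply_symm_apply]
    · intro x hx hc
      have h1 : π x = ⟨n, by omega⟩ := Fin.ext hc
      have h2 : x = π.symm ⟨n, by omega⟩ := by rw [← h1, Equiv.symm_apply_apply]
      exact hx (congrArg Fin.val h2)
  have hL1 : ∀ x y : Fin (n + 1), x.val < p → p < y.val → (π y).val < (π x).val := by
    intro x y hx hy
    by_contra hcon
    have hne : (π x).val ≠ (π y).val := by
      intro hc
      have h1 := π.injective (Fin.ext hc)
      have h2 := congrArg Fin.val h1
      omega
    have h1 : (π x).val < (π y).val := by omega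
    have h2 : (π y).val < n :=
      lt_of_le_of_ne (by have := (π y).isLt; omega) (hLne y (by omega))
    exact hπ ⟨x, ⟨p, by omega⟩, y, Fin.lt_def.mpr hx, Fin.lt_def.mpr hy,
      Fin.lt_def.mpr h1, Fin.lt_def.mpr (by rw [hL0v (by omega)]; omega)⟩
  have hL2 : ∀ x : Fin (n + 1), x.val < p → n - p ≤ (π x).val := by
    intro x hx
    have hf : ∀ k : Fin (n - p), ∃ y : Fin (n + 1), y.val = p + 1 + k.val ∧
        (π y).val < (π x).val := by
      intro k
      have hk := k.isLt
      refine ⟨⟨p + 1 + k.val, by omega⟩, rfl, hL1 x _ hx (by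
        show p < p + 1 + k.val; omega)⟩
    choose F hF1 hF2 using hf
    let f : Fin (n - p) → Fin (π x).val := fun k => ⟨(π (F k)).val, hF2 k⟩
    have hinj : Function.Injective f := by
      intro a b hab
      have h0 : (f a).val = (f b).val := congrArg Fin.val hab
      have h1 : (π (F a)).val = (π (F b)).val := h0
      have h2 := congrArg Fin.val (π.injective (Fin.ext h1))
      rw [hF1 a, hF1 b] at h2
      exact Fin.ext (by omega)
    have := Fintype.card_le_of_injective f hinj
    simpa using this
  have hL3 : ∀ y : Fin (n + 1), p < y.val → (π y).val < n - p := by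
    intro y hy
    by_contra hcon
    have hv : n - p ≤ (π y).val := by omega
    have hyn : (π y).val < n := by
      have h1 := hLne y (by omega)
      have := (π y).isLt
      omega
    -- to each k : Fin (p+2) associate a value in [n-p, n] i.e. an element of Fin (p+1)
    have hg : ∀ k : Fin (p + 2), ∃ v : Fin (p + 1),
        (k.val < p → ∀ h : k.val < n + 1, v.val + (n - p) = (π ⟨k.val, h⟩).val) ∧
        (k.val = p → v.val = p) ∧
        (k.val = p + 1 → v.val + (n - p) = (π y).val) := by
      intro k
      have hk := k.isLt
      rcases lt_trichotomy k.val p with h | h | h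
      · have hkn : k.val < n + 1 := by omega
        have h2 := hLne ⟨k.val, hkn⟩ (by show k.val ≠ p; omega)
        have h3 := hL2 ⟨k.val, hkn⟩ (by show k.val < p; omega)
        have h4 := (π (⟨k.val, hkn⟩ : Fin (n + 1))).isLt
        refine ⟨⟨(π ⟨k.val, hkn⟩).val - (n - p), by omega⟩, ?_, by omega, by omega⟩
        intro _ h'
        have h5 : (π ⟨k.val, h'⟩).val = (π ⟨k.val, hkn⟩).val :=
          congrArg (fun z : Fin (n + 1) => (π z).val)
            (Fin.ext rfl : (⟨k.val, h'⟩ : Fin (n + 1)) = ⟨k.val, hkn⟩)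
        show (π ⟨k.val, hkn⟩).val - (n - p) + (n - p) = (π ⟨k.val, h'⟩).val
        omega
      · exact ⟨⟨p, by omega⟩, by omega, fun _ => rfl, by omega⟩
      · have hk1 : k.val = p + 1 := by omega
        refine ⟨⟨(π y).val - (n - p), by omega⟩, by omega, by omega, ?_⟩
        intro _
        show (π y).val - (n - p) + (n - p) = (π y).val
        omega
    choose g hg1 hg2 hg3 using hg
    have hinj : Function.Injective g := by
      intro a b hab
      have ha2 := a.isLt
      have hb2 := b.isLt
      have hveq : (g a).val = (g b).val := congrArg Fin.val hab
      rcases lt_trichotomy a.val p with ha | ha | ha <;>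
        rcases lt_trichotomy b.val p with hb | hb | hb
      · have han : a.val < n + 1 := by omega
        have hbn : b.val < n + 1 := by omega
        have e1 := hg1 a ha han
        have e2 := hg1 b hb hbn
        have h1 : (π ⟨a.val, han⟩).val = (π ⟨b.val, hbn⟩).val := by omega
        have h2 := congrArg Fin.val (π.injective (Fin.ext h1))
        simp only [Fin.val_mk] at h2
        exact Fin.ext (by omega)
      · exfalso
        have han : a.val < n + 1 := by omega
        have e1 := hg1 a ha han
        have e2 := hg2 b hb
        have h2 := hLne ⟨a.val, han⟩ (by show a.val ≠ p; omega)
        have h4 := (π (⟨a.val, han⟩ : Fin (n + 1))).isLt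
        omega
      · exfalso
        have han : a.val < n + 1 := by omega
        have hb1 : b.val = p + 1 := by omega
        have e1 := hg1 a ha han
        have e2 := hg3 b hb1
        have h1 : (π ⟨a.val, han⟩).val = (π y).val := by omega
        have h2 := congrArg Fin.val (π.injective (Fin.ext h1))
        simp only [Fin.val_mk] at h2
        omega
      · exfalso
        have hbn : b.val < n + 1 := by omega
        have e1 := hg2 a ha
        have e2 := hg1 b hb hbn
        have h2 := hLne ⟨b.val, hbn⟩ (by show b.val ≠ p; omega)
        have h4 := (π (⟨b.val, hbn⟩ : Fin (n + 1))).isLt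
        omega
      · exact Fin.ext (by omega)
      · exfalso
        have hb1 : b.val = p + 1 := by omega
        have e1 := hg2 a ha
        have e2 := hg3 b hb1
        omega
      · exfalso
        have hbn : b.val < n + 1 := by omega
        have ha1 : a.val = p + 1 := by omega
        have e1 := hg3 a ha1
        have e2 := hg1 b hb hbn
        have h1 : (π ⟨b.val, hbn⟩).val = (π y).val := by omega
        have h2 := congrArg Fin.val (π.injective (Fin.ext h1))
        simp only [Fin.val_mk] at h2
        omega
      · exfalso
        have ha1 : a.val = p + 1 := by omega
        have e1 := hg3 a ha1
        have e2 := hg2 b hb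
        omega
      · exact Fin.ext (by omega)
    have := Fintype.card_le_of_injective g hinj
    simp at this
  -- build σ
  have hσex : ∀ a : Fin p, ∃ v : Fin p,
      ∀ h : a.val < n + 1, v.val + (n - p) = (π ⟨a.val, h⟩).val := by
    intro a
    have ha := a.isLt
    have han : a.val < n + 1 := by omega
    have h2 := hLne ⟨a.val, han⟩ (by show a.val ≠ p; omega)
    have h3 := hL2 ⟨a.val, han⟩ (by show a.val < p; omega)
    have h4 := (π (⟨a.val, han⟩ : Fin (n + 1))).isLt
    refine ⟨⟨(π ⟨a.val, han⟩).val - (n - p), by omega⟩, ?_⟩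
    intro h'
    have h5 : (π ⟨a.val, h'⟩).val = (π ⟨a.val, han⟩).val :=
      congrArg (fun z : Fin (n + 1) => (π z).val) (Fin.ext rfl)
    show (π ⟨a.val, han⟩).val - (n - p) + (n - p) = (π ⟨a.val, h'⟩).val
    omega
  choose σf hσf using hσex
  have hσinj : Function.Injective σf := by
    intro a b hab
    have ha := a.isLt
    have hb := b.isLt
    have han : a.val < n + 1 := by omega
    have hbn : b.val < n + 1 := by omega
    have e1 := hσf a han
    have e2 := hσf b hbn
    have h1 : (π ⟨a.val, han⟩).val = (π ⟨b.val, hbn⟩).val := by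
      rw [← e1, ← e2, congrArg Fin.val hab]
    have h2 := congrArg Fin.val (π.injective (Fin.ext h1))
    simp only [Fin.val_mk] at h2
    exact Fin.ext h2
  let σ : Equiv.Perm (Fin p) := Equiv.ofBijective σf (Finite.injective_iff_bijective.mp hσinj)
  have hσapp : ∀ a, σ a = σf a := fun a => rfl
  -- build τ
  have hτex : ∀ a : Fin (n - p), ∃ v : Fin (n - p),
      ∀ h : p + 1 + a.val < n + 1, v.val = (π ⟨p + 1 + a.val, h⟩).val := by
    intro a
    have ha := a.isLt
    have han : p + 1 + a.val < n + 1 := by omega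
    have h3 := hL3 ⟨p + 1 + a.val, han⟩ (by show p < p + 1 + a.val; omega)
    refine ⟨⟨(π ⟨p + 1 + a.val, han⟩).val, h3⟩, ?_⟩
    intro h'
    exact congrArg (fun z : Fin (n + 1) => (π z).val) (Fin.ext rfl)
  choose τf hτf using hτex
  have hτinj : Function.Injective τf := by
    intro a b hab
    have ha := a.isLt
    have hb := b.isLt
    have han : p + 1 + a.val < n + 1 := by omega
    have hbn : p + 1 + b.val < n + 1 := by omega
    have e1 := hτf a han
    have e2 := hτf b hbn
    have h1 : (π ⟨p + 1 + a.val, han⟩).val = (π ⟨p + 1 + b.val, hbn⟩).val := by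
      rw [← e1, ← e2, congrArg Fin.val hab]
    have h2 := congrArg Fin.val (π.injective (Fin.ext h1))
    simp only [Fin.val_mk] at h2
    exact Fin.ext (by omega)
  let τ : Equiv.Perm (Fin (n - p)) :=
    Equiv.ofBijective τf (Finite.injective_iff_bijective.mp hτinj)
  have hτapp : ∀ a, τ a = τf a := fun a => rfl
  -- avoidance
  have hσav : ¬ containsClassical132 σ := by
    rintro ⟨a, b, c, hab, hbc, h1, h2⟩
    have ha := a.isLt
    have hb := b.isLt
    have hc := c.isLt
    have han : a.val < n + 1 := by omega
    have hbn : b.val < n + 1 := by omega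
    have hcn : c.val < n + 1 := by omega
    have ea := hσf a han
    have eb := hσf b hbn
    have ec := hσf c hcn
    rw [hσapp, hσapp] at h1 h2
    have h1' : (σf a).val < (σf c).val := h1
    have h2' : (σf c).val < (σf b).val := h2
    have hab' : a.val < b.val := hab
    have hbc' : b.val < c.val := hbc
    exact hπ ⟨⟨a.val, han⟩, ⟨b.val, hbn⟩, ⟨c.val, hcn⟩, Fin.mk_lt_mk.mpr hab',
      Fin.mk_lt_mk.mpr hbc', Fin.lt_def.mpr (by omega), Fin.lt_def.mpr (by omega)⟩
  have hτav : ¬ containsClassical132 τ := by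
    rintro ⟨a, b, c, hab, hbc, h1, h2⟩
    have ha := a.isLt
    have hb := b.isLt
    have hc := c.isLt
    have han : p + 1 + a.val < n + 1 := by omega
    have hbn : p + 1 + b.val < n + 1 := by omega
    have hcn : p + 1 + c.val < n + 1 := by omega
    have ea := hτf a han
    have eb := hτf b hbn
    have ec := hτf c hcn
    rw [hτapp, hτapp] at h1 h2
    have h1' : (τf a).val < (τf c).val := h1
    have h2' : (τf c).val < (τf b).val := h2
    have hab' : a.val < b.val := hab
    have hbc' : b.val < c.val := hbc
    exact hπ ⟨⟨p + 1 + a.val, han⟩, ⟨p + 1 + b.val, hbn⟩, ⟨p + 1 + c.val, hcn⟩,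
      Fin.mk_lt_mk.mpr (by omega), Fin.mk_lt_mk.mpr (by omega),
      Fin.lt_def.mpr (by omega), Fin.lt_def.mpr (by omega)⟩
  refine ⟨p, hp, σ, τ, hσav, hτav, ?_⟩
  apply Equiv.ext
  intro x
  apply Fin.ext
  have hx := x.isLt
  rw [gluePerm_apply]
  rcases lt_trichotomy x.val p with h | h | h
  · rw [glueFun_val_lt hp σ τ x h, hσapp]
    have hcoe : (⟨x.val, h⟩ : Fin p).val < n + 1 := by
      have := (⟨x.val, h⟩ : Fin p).isLt
      omega
    have e := hσf ⟨x.val, h⟩ hcoe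
    have e2 : (π ⟨(⟨x.val, h⟩ : Fin p).val, hcoe⟩).val = (π x).val :=
      congrArg (fun z : Fin (n + 1) => (π z).val) (Fin.ext rfl)
    omega
  · rw [glueFun_val_eq hp σ τ x h]
    have e : (π x).val = (π ⟨p, by omega⟩).val :=
      congrArg (fun z : Fin (n + 1) => (π z).val) (Fin.ext h)
    rw [e, hL0v (by omega)]
  · have h3 : x.val - p - 1 < n - p := by omega
    rw [glueFun_val_gt hp σ τ x h h3, hτapp]
    have hcoe : p + 1 + (⟨x.val - p - 1, h3⟩ : Fin (n - p)).val < n + 1 := by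
      have := (⟨x.val - p - 1, h3⟩ : Fin (n - p)).isLt
      omega
    have e := hτf ⟨x.val - p - 1, h3⟩ hcoe
    have e2 : (π ⟨p + 1 + (⟨x.val - p - 1, h3⟩ : Fin (n - p)).val, hcoe⟩).val = (π x).val :=
      congrArg (fun z : Fin (n + 1) => (π z).val)
        (Fin.ext (by show p + 1 + (x.val - p - 1) = x.val; omega))
    omega

noncomputable def glueAv (n : ℕ) : (Σ p : Fin (n + 1), Av p.val × Av (n - p.val)) → Av (n + 1) :=
  fun x => ⟨gluePerm x.1.val n (by have := x.1.isLt; omega) x.2.1.1 x.2.2.1,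
    glue_avoid _ _ _ x.2.1.2 x.2.2.2⟩

lemma glueAv_bijective (n : ℕ) : Function.Bijective (glueAv n) := by
  constructor
  · rintro ⟨p, ⟨σ1, hσ1⟩, ⟨τ1, hτ1⟩⟩ ⟨q, ⟨σ2, hσ2⟩, ⟨τ2, hτ2⟩⟩ heq
    have hp := p.isLt
    have hq := q.isLt
    have hp' : p.val ≤ n := by omega
    have hq' : q.val ≤ n := by omega
    have hperm : gluePerm p.val n hp' σ1 τ1 = gluePerm q.val n hq' σ2 τ2 :=
      congrArg Subtype.val heq
    have happ : ∀ z : Fin (n + 1),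
        (glueFun p.val n hp' σ1 τ1 z).val = (glueFun q.val n hq' σ2 τ2 z).val := by
      intro z
      have := congrArg (fun e : Equiv.Perm (Fin (n + 1)) => (e z).val) hperm
      simpa [gluePerm_apply] using this
    -- p = q
    have hpq : p = q := by
      apply Fin.ext
      by_contra hne
      have h1 := happ ⟨p.val, by omega⟩
      rw [glueFun_val_eq hp' σ1 τ1 _ rfl] at h1
      rcases lt_trichotomy p.val q.val with h | h | h
      · rw [glueFun_val_lt hq' σ2 τ2 ⟨p.val, by omega⟩ h] at h1
        have := (σ2 ⟨(⟨p.val, by omega⟩ : Fin (n + 1)).val, h⟩).isLt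
        omega
      · exact hne h
      · have h3 : (⟨p.val, by omega⟩ : Fin (n + 1)).val - q.val - 1 < n - q.val := by
          show p.val - q.val - 1 < n - q.val
          omega
        rw [glueFun_val_gt hq' σ2 τ2 ⟨p.val, by omega⟩ h h3] at h1
        have := (τ2 ⟨(⟨p.val, by omega⟩ : Fin (n + 1)).val - q.val - 1, h3⟩).isLt
        omega
    subst hpq
    have hσ : σ1 = σ2 := by
      apply Equiv.ext
      intro a
      have ha := a.isLt
      apply Fin.ext
      have h1 := happ ⟨a.val, by omega⟩
      rw [glueFun_val_lt hp' σ1 τ1 ⟨a.val, by omega⟩ (by show a.val < p.val; omega),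
        glueFun_val_lt hq' σ2 τ2 ⟨a.val, by omega⟩ (by show a.val < p.val; omega)] at h1
      have e1 : σ1 ⟨(⟨a.val, by omega⟩ : Fin (n + 1)).val, by show a.val < p.val; omega⟩ = σ1 a :=
        congrArg σ1 (Fin.ext rfl)
      have e2 : σ2 ⟨(⟨a.val, by omega⟩ : Fin (n + 1)).val, by show a.val < p.val; omega⟩ = σ2 a :=
        congrArg σ2 (Fin.ext rfl)
      have v1 := congrArg Fin.val e1
      have v2 := congrArg Fin.val e2
      omega
    have hτ : τ1 = τ2 := by
      apply Equiv.ext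
      intro a
      have ha := a.isLt
      apply Fin.ext
      have h1 := happ ⟨p.val + 1 + a.val, by omega⟩
      have hgt : p.val < (⟨p.val + 1 + a.val, by omega⟩ : Fin (n + 1)).val := by
        show p.val < p.val + 1 + a.val; omega
      have h3 : (⟨p.val + 1 + a.val, by omega⟩ : Fin (n + 1)).val - p.val - 1 < n - p.val := by
        show p.val + 1 + a.val - p.val - 1 < n - p.val; omega
      rw [glueFun_val_gt hp' σ1 τ1 _ hgt h3, glueFun_val_gt hq' σ2 τ2 _ hgt h3] at h1
      have e1 : τ1 ⟨(⟨p.val + 1 + a.val, by omega⟩ : Fin (n + 1)).val - p.val - 1, h3⟩ = τ1 a :=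
        congrArg τ1 (Fin.ext (by show p.val + 1 + a.val - p.val - 1 = a.val; omega))
      have e2 : τ2 ⟨(⟨p.val + 1 + a.val, by omega⟩ : Fin (n + 1)).val - p.val - 1, h3⟩ = τ2 a :=
        congrArg τ2 (Fin.ext (by show p.val + 1 + a.val - p.val - 1 = a.val; omega))
      have v1 := congrArg Fin.val e1
      have v2 := congrArg Fin.val e2
      omega
    subst hσ
    subst hτ
    rfl
  · rintro ⟨π, hπ⟩
    obtain ⟨p, hp, σ, τ, hσ, hτ, heq⟩ := decomp π hπ
    refine ⟨⟨⟨p, by omega⟩, ⟨σ, hσ⟩, ⟨τ, hτ⟩⟩, ?_⟩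
    exact Subtype.ext heq

lemma nat_card_sigma_fin {N : ℕ} (F : Fin N → Type) [∀ i, Finite (F i)] :
    Nat.card (Σ i, F i) = ∑ i, Nat.card (F i) := by
  letI : ∀ i, Fintype (F i) := fun i => Fintype.ofFinite _
  simp [Nat.card_eq_fintype_card]

lemma card_av : ∀ m, Nat.card (Av m) = catalan m := by
  intro m
  induction m using Nat.strong_induction_on with
  | _ m ih =>
    match m, ih with
    | 0, _ =>
      have h1 : Subsingleton (Av 0) := ⟨fun a b => Subtype.ext (Subsingleton.elim _ _)⟩
      have h2 : Nonempty (Av 0) := ⟨⟨1, by rintro ⟨i, _, _, _⟩; exact i.elim0⟩⟩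
      rw [catalan_zero, Nat.card_eq_one_iff_unique]
      exact ⟨h1, h2⟩
    | (k + 1), ih =>
      rw [← Nat.card_eq_of_bijective _ (glueAv_bijective k)]
      rw [nat_card_sigma_fin]
      rw [catalan_succ]
      apply Finset.sum_congr rfl
      intro p _
      rw [Nat.card_prod, ih p.val (by have := p.isLt; omega),
        ih (k - p.val) (by have := p.isLt; omega)]

theorem stmt14 (n : ℕ) :
    (∀ π : Equiv.Perm (Fin n), (¬ contains132 π ∧ ¬ contains13_2 π) ↔ ¬ containsClassical132 π) ∧
    Nat.card {π : Equiv.Perm (Fin n) // ¬ contains132 π ∧ ¬ contains13_2 π} = catalan n := by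
  have hiff : ∀ π : Equiv.Perm (Fin n),
      (¬ contains132 π ∧ ¬ contains13_2 π) ↔ ¬ containsClassical132 π := by
    intro π
    constructor
    · rintro ⟨h1, h2⟩ hc
      exact h2 (classical_c13_2 hc)
    · intro hc
      exact ⟨fun h => hc (c132_classical h), fun h => hc (c13_2_classical h)⟩
  refine ⟨hiff, ?_⟩
  rw [Nat.card_congr (Equiv.subtypeEquivRight hiff)]
  exact card_av n
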